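/- Let n ≥ 16, let 𝔽 be a finite field with exactly n elements identified with [n], and let Inv be a zero-advice non-adaptive inverter with an affine decoder: for every y ∈ [n] there exist α^y ∈ 𝔽^n and β^y ∈ 𝔽 such that Inv(y; f) = ⟨α^y, f⟩ + β^y for all f ∈ F_n. Let F be uniform over F_n and Y = (Y_1, …, Y_n) uniform over [n]^n, independent of F; let X_j := Inv(Y_j; F) and let Z_m be the event that F(X_j) = Y_j for all j ∈ [m]. Then for every natural number m ≤ n/16: Pr[Z_m] ≤ ∏_{j=1}^{m} (2j/n + max{(1/n)^{1/4}, 4j/n}). -/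

import Mathlib

/-!
Fix targets `y₁, …, y_p` and the points `x_k = Inv(y_k; f)` queried for them. The functions `f`
that succeed on all of them with these queries form a coset `V` of a subspace `U` cut out by
`2p` linear conditions, and a subspace of codimension `c` has at most `c` common zeros. Take a
fresh target `z`. If `Inv(z; ·)` is constant on `V`, with value `t`, then either `U` moves the
coordinate `t` and `f t = z` on a `1/n` fraction of `V`, or `f t` is constant on `V`; since
`z ↦ t` is injective on the targets of the latter kind that succeed, there are at most `2p` of
them. If `Inv(z; ·)` is not constant on `V`, each query point `x` is taken on at most a `1/n`
fraction of `V`, on which `f x = z` holds for a further `1/n` fraction unless `x` is one of the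
at most `2p + 1` common zeros of the subspace of `U` on which `Inv(z; ·)` is constant. Summing
over `z`, the `(p+1)`-st success has conditional probability at most `(4p + 2)/n ≤ 4(p+1)/n`,
which is already below the factor in the claimed product.
-/

open Finset Module LinearMap

open scoped Classical

theorem sum_sum_update {ι α M : Type*} [Fintype ι] [DecidableEq ι] [Fintype α]
    [AddCommMonoid M] (i : ι) (Φ : (ι → α) → M) :
    ∑ y, ∑ z, Φ (Function.update y i z) = Fintype.card α • ∑ y, Φ y := by
  have hinv : Function.Involutive fun p : (ι → α) × α => (Function.update p.1 i p.2, p.1 i) := by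
    rintro ⟨y, z⟩
    simp
  rw [← Fintype.sum_prod_type', ← Equiv.sum_comp (hinv.toPerm _)]
  simp [Fintype.sum_prod_type, smul_sum]

theorem card_filter_eq_sum_fiberwise {α β : Type*} [Fintype β] [DecidableEq β] (S : Finset α)
    (q : α → β) (P : α → β → Prop) :
    #{a ∈ S | P a (q a)} = ∑ b, #{a ∈ {a ∈ S | q a = b} | P a b} := by
  rw [card_eq_sum_card_fiberwise (f := q) (t := univ) (fun _ _ => mem_coe.mpr (mem_univ _))]
  refine sum_congr rfl fun b _ => ?_
  rw [filter_filter, filter_filter]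
  refine congrArg card (filter_congr fun a _ => ?_)
  constructor
  · rintro ⟨hP, rfl⟩
    exact ⟨rfl, hP⟩
  · rintro ⟨rfl, hP⟩
    exact ⟨hP, rfl⟩

section Translation

variable {𝔽 E : Type*} [Field 𝔽] [AddCommGroup E] [Module 𝔽 E]

theorem card_filter_mul_card_le [Fintype 𝔽] {S : Finset E} {W : Submodule 𝔽 E}
    (hS : ∀ f ∈ S, ∀ u ∈ W, f + u ∈ S) (φ : E →ᵃ[𝔽] 𝔽) {u : E} (hu : u ∈ W)
    (hφu : φ.linear u ≠ 0) (c : 𝔽) :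
    #{f ∈ S | φ f = c} * Fintype.card 𝔽 ≤ #S := by
  have hφ : ∀ f (s : 𝔽), φ (f + (s / φ.linear u) • u) = φ f + s := fun f s => by
    rw [add_comm f, ← vadd_eq_add, φ.map_vadd, map_smul, smul_eq_mul, div_mul_cancel₀ _ hφu,
      vadd_eq_add, add_comm]
  rw [← card_univ, ← card_product]
  refine card_le_card_of_injOn (fun q => q.1 + (q.2 / φ.linear u) • u) ?_ ?_
  · rintro ⟨f, s⟩ hfs
    simp only [coe_product, Set.mem_prod, mem_coe, mem_filter] at hfs
    exact hS f hfs.1.1 _ (W.smul_mem _ hu)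
  · rintro ⟨f₁, s₁⟩ h₁ ⟨f₂, s₂⟩ h₂ h
    simp only [coe_product, Set.mem_prod, mem_coe, mem_filter] at h₁ h₂ h
    have hs : s₁ = s₂ := by simpa [hφ, h₁.1.2, h₂.1.2] using congrArg φ h
    subst hs
    simpa using h

theorem filter_add_mem_of_mem_inf_ker {S : Finset E} {W : Submodule 𝔽 E}
    (hS : ∀ f ∈ S, ∀ u ∈ W, f + u ∈ S) (φ : E →ᵃ[𝔽] 𝔽) (c : 𝔽) :
    ∀ f ∈ {f ∈ S | φ f = c}, ∀ u ∈ W ⊓ ker φ.linear, f + u ∈ {f ∈ S | φ f = c} := by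
  intro f hf u hu
  rw [mem_filter] at hf ⊢
  rw [Submodule.mem_inf, mem_ker] at hu
  refine ⟨hS f hf.1 u hu.1, ?_⟩
  rw [add_comm, ← vadd_eq_add, φ.map_vadd, hu.2, zero_vadd, hf.2]

noncomputable def commonZeros {ι : Type*} [Fintype ι] (W : Submodule 𝔽 (ι → 𝔽)) : Finset ι :=
  {x | ∀ u ∈ W, u x = 0}

theorem mem_commonZeros {ι : Type*} [Fintype ι] {W : Submodule 𝔽 (ι → 𝔽)} {x : ι} :
    x ∈ commonZeros W ↔ ∀ u ∈ W, u x = 0 := by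
  simp [commonZeros]

theorem card_commonZeros_ker_le {ι M : Type*} [Fintype ι] [AddCommGroup M] [Module 𝔽 M]
    [FiniteDimensional 𝔽 M] (L : (ι → 𝔽) →ₗ[𝔽] M) :
    #(commonZeros (ker L)) ≤ finrank 𝔽 M := by
  set D := commonZeros (ker L)
  let extendByZero : (D → 𝔽) →ₗ[𝔽] ι → 𝔽 :=
    LinearMap.pi fun x => if h : x ∈ D then LinearMap.proj ⟨x, h⟩ else 0
  have hinj : Function.Injective (L ∘ₗ extendByZero) := by
    rw [← ker_eq_bot, ker_eq_bot']
    intro g hg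
    funext x
    have hx := mem_commonZeros.mp x.2 _ (mem_ker.mpr hg)
    simpa [extendByZero] using hx
  simpa using finrank_le_finrank_of_injective hinj

end Translation

section Decoder

variable {𝔽 : Type*} [Field 𝔽] [Fintype 𝔽]

theorem card_filter_success_mul_le_of_linear_ne_zero {V : Finset (𝔽 → 𝔽)}
    {U : Submodule 𝔽 (𝔽 → 𝔽)} (hV : ∀ f ∈ V, ∀ u ∈ U, f + u ∈ V) (φ : (𝔽 → 𝔽) →ᵃ[𝔽] 𝔽)
    {u : 𝔽 → 𝔽} (hu : u ∈ U) (hφu : φ.linear u ≠ 0) (z : 𝔽) {b : ℕ}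
    (hb : #(commonZeros (U ⊓ ker φ.linear)) ≤ b) :
    #{f ∈ V | f (φ f) = z} * Fintype.card 𝔽 ≤ (b + 1) * #V := by
  set n := Fintype.card 𝔽
  set D := commonZeros (U ⊓ ker φ.linear)
  have hfib := card_filter_eq_sum_fiberwise V φ fun f x => f x = z
  have hx : ∀ x, #{f ∈ {f ∈ V | φ f = x} | f x = z} * n * n ≤
      (if x ∈ D then n * #V else 0) + #V := by
    intro x
    have hVx : #{f ∈ V | φ f = x} * n ≤ #V := card_filter_mul_card_le hV φ hu hφu x
    by_cases hxD : x ∈ D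
    · rw [if_pos hxD]
      calc #{f ∈ {f ∈ V | φ f = x} | f x = z} * n * n ≤ #{f ∈ V | φ f = x} * n * n := by
            gcongr
            exact filter_subset _ _
        _ ≤ n * #V := by rw [mul_comm]; gcongr
        _ ≤ n * #V + #V := Nat.le_add_right _ _
    · rw [if_neg hxD, zero_add]
      simp only [D, mem_commonZeros, not_forall] at hxD
      obtain ⟨v, hv, hvx⟩ := hxD
      calc #{f ∈ {f ∈ V | φ f = x} | f x = z} * n * n ≤ #{f ∈ V | φ f = x} * n :=
            Nat.mul_le_mul_right _ <| card_filter_mul_card_le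
              (filter_add_mem_of_mem_inf_ker hV φ x)
              (LinearMap.proj x : (𝔽 → 𝔽) →ₗ[𝔽] 𝔽).toAffineMap hv hvx z
        _ ≤ #V := hVx
  refine Nat.le_of_mul_le_mul_right (c := n) ?_ Fintype.card_pos
  calc #{f ∈ V | f (φ f) = z} * n * n = ∑ x, #{f ∈ {f ∈ V | φ f = x} | f x = z} * n * n := by
        rw [hfib, sum_mul, sum_mul]
    _ ≤ ∑ x, ((if x ∈ D then n * #V else 0) + #V) := sum_le_sum fun x _ => hx x
    _ = #D * (n * #V) + n * #V := by
        rw [sum_add_distrib, sum_ite_mem, univ_inter, sum_const, sum_const, card_univ,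
          smul_eq_mul, smul_eq_mul]
    _ ≤ (b + 1) * #V * n := by
        have : #D * (n * #V) ≤ b * (n * #V) := Nat.mul_le_mul_right _ hb
        nlinarith

theorem card_filter_success_mul_le {M : Type*} [AddCommGroup M] [Module 𝔽 M]
    [FiniteDimensional 𝔽 M] (L : (𝔽 → 𝔽) →ₗ[𝔽] M) {V : Finset (𝔽 → 𝔽)}
    (hV : ∀ f ∈ V, ∀ u ∈ ker L, f + u ∈ V) (hV' : ∀ f ∈ V, ∀ g ∈ V, f - g ∈ ker L)
    {f₀ : 𝔽 → 𝔽} (hf₀ : f₀ ∈ V) (φ : (𝔽 → 𝔽) →ᵃ[𝔽] 𝔽) (z : 𝔽)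
    (hz : ¬((∀ u ∈ ker L, φ.linear u = 0) ∧ φ f₀ ∈ commonZeros (ker L) ∧ f₀ (φ f₀) = z)) :
    #{f ∈ V | f (φ f) = z} * Fintype.card 𝔽 ≤ (finrank 𝔽 M + 2) * #V := by
  by_cases hconst : ∀ u ∈ ker L, φ.linear u = 0
  · have hval : ∀ f ∈ V, φ f = φ f₀ := fun f hf => by
      have h := hconst _ (hV' f hf f₀ hf₀)
      rwa [← vsub_eq_sub, AffineMap.linearMap_vsub, vsub_eq_sub, sub_eq_zero] at h
    rw [filter_congr fun f hf => by rw [hval f hf]]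
    by_cases hfixed : φ f₀ ∈ commonZeros (ker L)
    · have hempty : {f ∈ V | f (φ f₀) = z} = ∅ := filter_eq_empty_iff.mpr fun f hf hfz => by
        have h := mem_commonZeros.mp hfixed _ (hV' f hf f₀ hf₀)
        rw [Pi.sub_apply, sub_eq_zero, hfz] at h
        exact hz ⟨hconst, hfixed, h.symm⟩
      simp [hempty]
    · simp only [mem_commonZeros, not_forall] at hfixed
      obtain ⟨u, hu, hut⟩ := hfixed
      calc #{f ∈ V | f (φ f₀) = z} * Fintype.card 𝔽 ≤ #V :=
            card_filter_mul_card_le hV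
              (LinearMap.proj (φ f₀) : (𝔽 → 𝔽) →ₗ[𝔽] 𝔽).toAffineMap hu hut z
        _ ≤ (finrank 𝔽 M + 2) * #V := Nat.le_mul_of_pos_left _ (by omega)
  · simp only [not_forall] at hconst
    obtain ⟨u, hu, hφu⟩ := hconst
    have hb := card_commonZeros_ker_le (L.prod φ.linear)
    rw [ker_prod, finrank_prod, finrank_self] at hb
    exact card_filter_success_mul_le_of_linear_ne_zero hV φ hu hφu z hb

theorem sum_card_filter_success_le {M : Type*} [AddCommGroup M] [Module 𝔽 M]
    [FiniteDimensional 𝔽 M] (L : (𝔽 → 𝔽) →ₗ[𝔽] M) {V : Finset (𝔽 → 𝔽)}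
    (hV : ∀ f ∈ V, ∀ u ∈ ker L, f + u ∈ V) (hV' : ∀ f ∈ V, ∀ g ∈ V, f - g ∈ ker L)
    (inv : 𝔽 → (𝔽 → 𝔽) →ᵃ[𝔽] 𝔽) :
    ∑ z, #{f ∈ V | f (inv z f) = z} ≤ (2 * finrank 𝔽 M + 2) * #V := by
  rcases V.eq_empty_or_nonempty with rfl | ⟨f₀, hf₀⟩
  · simp
  set n := Fintype.card 𝔽
  set B : Finset 𝔽 := {z | (∀ u ∈ ker L, (inv z).linear u = 0) ∧
    inv z f₀ ∈ commonZeros (ker L) ∧ f₀ (inv z f₀) = z}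
  have hB : #B ≤ finrank 𝔽 M := by
    refine le_trans (card_le_card_of_injOn (fun z => inv z f₀) (t := commonZeros (ker L))
      ?_ ?_) (card_commonZeros_ker_le L)
    · intro z hz
      simp only [B, coe_filter, mem_univ, true_and, Set.mem_ofPred_eq] at hz
      exact hz.2.1
    · intro z₁ hz₁ z₂ hz₂ h
      simp only [B, coe_filter, mem_univ, true_and, Set.mem_ofPred_eq] at hz₁ hz₂
      rw [← hz₁.2.2, ← hz₂.2.2]
      exact congrArg f₀ h
  refine Nat.le_of_mul_le_mul_right (c := n) ?_ Fintype.card_pos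
  calc (∑ z, #{f ∈ V | f (inv z f) = z}) * n = ∑ z, #{f ∈ V | f (inv z f) = z} * n := sum_mul ..
    _ ≤ ∑ z, ((if z ∈ B then n * #V else 0) + (finrank 𝔽 M + 2) * #V) := sum_le_sum fun z _ => by
        by_cases hz : z ∈ B
        · rw [if_pos hz, mul_comm]
          exact le_add_right (Nat.mul_le_mul_left _ (card_le_card (filter_subset _ _)))
        · rw [if_neg hz, zero_add]
          exact card_filter_success_mul_le L hV hV' hf₀ (inv z) z fun h =>
            hz (mem_filter.mpr ⟨mem_univ _, h⟩)
    _ = #B * (n * #V) + n * ((finrank 𝔽 M + 2) * #V) := by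
        rw [sum_add_distrib, sum_ite_mem, univ_inter, sum_const, sum_const, card_univ,
          smul_eq_mul, smul_eq_mul]
    _ ≤ (2 * finrank 𝔽 M + 2) * #V * n := by
        have : #B * (n * #V) ≤ finrank 𝔽 M * (n * #V) := Nat.mul_le_mul_right _ hB
        nlinarith

end Decoder

section Queries

variable {𝔽 κ : Type*} [Field 𝔽] (inv : 𝔽 → (𝔽 → 𝔽) →ᵃ[𝔽] 𝔽)

def queryConstraints (y x : κ → 𝔽) : (𝔽 → 𝔽) →ₗ[𝔽] (κ → 𝔽) × (κ → 𝔽) :=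
  (LinearMap.pi fun k => (inv (y k)).linear).prod (LinearMap.pi fun k => LinearMap.proj (x k))

theorem mem_ker_queryConstraints {y x : κ → 𝔽} {u : 𝔽 → 𝔽} :
    u ∈ ker (queryConstraints inv y x) ↔ ∀ k, (inv (y k)).linear u = 0 ∧ u (x k) = 0 := by
  simp [queryConstraints, funext_iff, forall_and]

variable [Fintype 𝔽] [Fintype κ]

noncomputable def querySet (y x : κ → 𝔽) : Finset (𝔽 → 𝔽) :=
  {f | ∀ k, inv (y k) f = x k ∧ f (x k) = y k}

theorem add_mem_querySet {y x : κ → 𝔽} {f u : 𝔽 → 𝔽} (hf : f ∈ querySet inv y x)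
    (hu : u ∈ ker (queryConstraints inv y x)) : f + u ∈ querySet inv y x := by
  simp only [querySet, mem_filter, mem_univ, true_and] at hf ⊢
  rw [mem_ker_queryConstraints] at hu
  intro k
  rw [add_comm, ← vadd_eq_add, AffineMap.map_vadd, (hu k).1, zero_vadd, vadd_eq_add,
    Pi.add_apply, (hf k).1, (hu k).2, (hf k).2, zero_add]
  exact ⟨rfl, rfl⟩

theorem sub_mem_ker_queryConstraints {y x : κ → 𝔽} {f g : 𝔽 → 𝔽} (hf : f ∈ querySet inv y x)
    (hg : g ∈ querySet inv y x) : f - g ∈ ker (queryConstraints inv y x) := by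
  simp only [querySet, mem_filter, mem_univ, true_and] at hf hg
  rw [mem_ker_queryConstraints]
  intro k
  rw [Pi.sub_apply, ← vsub_eq_sub f g, AffineMap.linearMap_vsub, vsub_eq_sub, (hf k).1, (hg k).1,
    (hf k).2, (hg k).2]
  exact ⟨sub_self _, sub_self _⟩

theorem sum_card_filter_querySet (y : κ → 𝔽) (P : (𝔽 → 𝔽) → Prop) :
    ∑ x, #{f ∈ querySet inv y x | P f} = #{f : 𝔽 → 𝔽 | (∀ k, f (inv (y k) f) = y k) ∧ P f} := by
  rw [card_eq_sum_card_fiberwise (f := fun f k => inv (y k) f) (t := univ)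
    (fun _ _ => mem_coe.mpr (mem_univ _))]
  refine sum_congr rfl fun x _ => congrArg card ?_
  ext f
  simp only [querySet, mem_filter, mem_univ, true_and, funext_iff]
  constructor
  · rintro ⟨hfx, hP⟩
    exact ⟨⟨fun k => (hfx k).1 ▸ (hfx k).2, hP⟩, fun k => (hfx k).1⟩
  · rintro ⟨⟨hf, hP⟩, hx⟩
    exact ⟨fun k => ⟨hx k, hx k ▸ hf k⟩, hP⟩

theorem sum_card_success_le (y : κ → 𝔽) :
    ∑ z, #{f : 𝔽 → 𝔽 | (∀ k, f (inv (y k) f) = y k) ∧ f (inv z f) = z} ≤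
      (4 * Fintype.card κ + 2) * #{f : 𝔽 → 𝔽 | ∀ k, f (inv (y k) f) = y k} := by
  calc ∑ z, #{f : 𝔽 → 𝔽 | (∀ k, f (inv (y k) f) = y k) ∧ f (inv z f) = z}
      = ∑ x, ∑ z, #{f ∈ querySet inv y x | f (inv z f) = z} := by
        rw [sum_comm]
        exact sum_congr rfl fun z _ => (sum_card_filter_querySet inv y _).symm
    _ ≤ ∑ x, (4 * Fintype.card κ + 2) * #(querySet inv y x) := sum_le_sum fun x _ => by
        have h := sum_card_filter_success_le (queryConstraints inv y x)
          (fun f hf u hu => add_mem_querySet inv hf hu)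
          (fun f hf g hg => sub_mem_ker_queryConstraints inv hf hg) inv
        rw [finrank_prod, finrank_fintype_fun_eq_card] at h
        linarith
    _ = (4 * Fintype.card κ + 2) * #{f : 𝔽 → 𝔽 | ∀ k, f (inv (y k) f) = y k} := by
        have h := sum_card_filter_querySet inv y fun _ => True
        simp only [filter_true, and_true] at h
        rw [← mul_sum, h]

end Queries

section Induction

variable {𝔽 ι : Type*} [Field 𝔽] [Fintype 𝔽] [Fintype ι] [DecidableEq ι]
  (inv : 𝔽 → (𝔽 → 𝔽) →ᵃ[𝔽] 𝔽)

noncomputable def successPairs (J : Finset ι) : Finset ((𝔽 → 𝔽) × (ι → 𝔽)) :=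
  {p | ∀ j ∈ J, p.1 (inv (p.2 j) p.1) = p.2 j}

theorem card_successPairs (J : Finset ι) :
    #(successPairs inv J) = ∑ y : ι → 𝔽, #{f : 𝔽 → 𝔽 | ∀ j ∈ J, f (inv (y j) f) = y j} := by
  simp only [successPairs, card_filter]
  exact Fintype.sum_prod_type_right _

theorem card_mul_card_successPairs_insert_le {i : ι} {J : Finset ι} (hi : i ∉ J) :
    Fintype.card 𝔽 * #(successPairs inv (insert i J)) ≤ (4 * #J + 2) * #(successPairs inv J) := by
  rw [card_successPairs, card_successPairs, ← smul_eq_mul, ← sum_sum_update i, mul_sum]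
  refine sum_le_sum fun y _ => ?_
  have h := sum_card_success_le inv fun j : J => y j
  simp only [Fintype.card_coe, Subtype.forall] at h
  refine (sum_congr rfl fun z _ => congrArg card (filter_congr fun f _ => ?_)).trans_le h
  rw [forall_mem_insert, and_comm, Function.update_self]
  refine and_congr_left' (forall₂_congr fun j hj => ?_)
  rw [Function.update_of_ne (ne_of_mem_of_not_mem hj hi)]

theorem pow_card_mul_card_successPairs_le (J : Finset ι) :
    Fintype.card 𝔽 ^ #J * #(successPairs inv J) ≤
      (∏ j ∈ Icc 1 #J, 4 * j) * Fintype.card ((𝔽 → 𝔽) × (ι → 𝔽)) := by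
  induction J using Finset.induction_on with
  | empty => simp [successPairs]
  | insert i J hi ih =>
    set n := Fintype.card 𝔽
    rw [card_insert_of_notMem hi, prod_Icc_succ_top (by omega)]
    calc n ^ (#J + 1) * #(successPairs inv (insert i J))
        = n ^ #J * (n * #(successPairs inv (insert i J))) := by ring
      _ ≤ n ^ #J * ((4 * #J + 2) * #(successPairs inv J)) :=
          Nat.mul_le_mul_left _ (card_mul_card_successPairs_insert_le inv hi)
      _ ≤ 4 * (#J + 1) * (n ^ #J * #(successPairs inv J)) := by
          rw [mul_left_comm]
          gcongr
          omega
      _ ≤ 4 * (#J + 1) * ((∏ j ∈ Icc 1 #J, 4 * j) * Fintype.card ((𝔽 → 𝔽) × (ι → 𝔽))) := by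
          gcongr
      _ = _ := by ring

theorem card_successPairs_div_le (J : Finset ι) :
    (#(successPairs inv J) : ℝ) / Fintype.card ((𝔽 → 𝔽) × (ι → 𝔽)) ≤
      ∏ j ∈ Icc 1 #J, 4 * (j : ℝ) / Fintype.card 𝔽 := by
  have h : (Fintype.card 𝔽 : ℝ) ^ #J * #(successPairs inv J) ≤
      (∏ j ∈ Icc 1 #J, 4 * (j : ℝ)) * Fintype.card ((𝔽 → 𝔽) × (ι → 𝔽)) := by
    exact_mod_cast pow_card_mul_card_successPairs_le inv J
  rw [prod_div_distrib, prod_const, Nat.card_Icc, Nat.add_sub_cancel,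
    div_le_div_iff₀ (by positivity) (by positivity)]
  linarith

end Induction

theorem stmt_8_general {𝔽 : Type} [Field 𝔽] [Fintype 𝔽] (n : ℕ) (hn : Fintype.card 𝔽 = n)
    (Inv : 𝔽 → (𝔽 → 𝔽) → 𝔽)
    (haff : ∀ y : 𝔽, ∃ (α : 𝔽 → 𝔽) (β : 𝔽),
      ∀ f : 𝔽 → 𝔽, Inv y f = (∑ x : 𝔽, α x * f x) + β)
    (m : ℕ) (hm : (m : ℝ) ≤ (n : ℝ) / 16) :
    (Nat.card {fy : (𝔽 → 𝔽) × (Fin n → 𝔽) //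
        ∀ j : Fin n, (j : ℕ) < m → fy.1 (Inv (fy.2 j) fy.1) = fy.2 j} : ℝ)
      / (Nat.card ((𝔽 → 𝔽) × (Fin n → 𝔽))) ≤
    ∏ j ∈ Finset.Icc 1 m,
      (2 * (j : ℝ) / n + max ((1 / (n : ℝ)) ^ ((1 : ℝ) / 4)) (4 * (j : ℝ) / n)) := by
  obtain ⟨inv, rfl⟩ : ∃ inv : 𝔽 → (𝔽 → 𝔽) →ᵃ[𝔽] 𝔽, (fun y => ⇑(inv y)) = Inv := by
    choose α β hαβ using haff
    refine ⟨fun y => ⟨Inv y, Fintype.linearCombination 𝔽 (α y), fun f u => ?_⟩, funext fun y => ?_⟩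
    · simp [hαβ, Fintype.linearCombination_apply, mul_add, sum_add_distrib, mul_comm, add_assoc]
    · rfl
  have hmn : m ≤ n := by
    have : (m : ℝ) ≤ n := by linarith [(n.cast_nonneg : (0 : ℝ) ≤ n)]
    exact_mod_cast this
  have hS : Nat.card {fy : (𝔽 → 𝔽) × (Fin n → 𝔽) //
      ∀ j : Fin n, (j : ℕ) < m → fy.1 (inv (fy.2 j) fy.1) = fy.2 j} =
      #(successPairs inv {j : Fin n | (j : ℕ) < m}) := by
    rw [Nat.card_eq_fintype_card, Fintype.card_subtype]
    simp [successPairs]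
  rw [hS, Nat.card_eq_fintype_card]
  refine (card_successPairs_div_le inv _).trans ?_
  rw [Fin.card_filter_val_lt, min_eq_right hmn, hn]
  gcongr with j
  have : 0 ≤ 2 * (j : ℝ) / n := by positivity
  linarith [le_max_right ((1 / (n : ℝ)) ^ ((1 : ℝ) / 4)) (4 * (j : ℝ) / n)]

/-- Let `n ≥ 16`, `𝔽` a finite field with exactly `n` elements identified
with `[n]`, and `Inv` a zero-advice non-adaptive inverter with an affine decoder. With `F`
uniform over `F_n`, `Y` uniform over `[n]^n` independent of `F`, and `Z_m` the event
`∀ j ≤ m, F(Inv(Y_j; F)) = Y_j`, for every natural `m ≤ n/16`: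
`Pr[Z_m] ≤ ∏_{j=1}^{m} (2j/n + max{(1/n)^{1/4}, 4j/n})`. -/
theorem stmt_8 {𝔽 : Type} [Field 𝔽] [Fintype 𝔽] (n : ℕ) (hn : Fintype.card 𝔽 = n)
    (hn16 : 16 ≤ n)
    (Inv : 𝔽 → (𝔽 → 𝔽) → 𝔽)
    (haff : ∀ y : 𝔽, ∃ (α : 𝔽 → 𝔽) (β : 𝔽),
      ∀ f : 𝔽 → 𝔽, Inv y f = (∑ x : 𝔽, α x * f x) + β)
    (m : ℕ) (hm : (m : ℝ) ≤ (n : ℝ) / 16) :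
    (Nat.card {fy : (𝔽 → 𝔽) × (Fin n → 𝔽) //
        ∀ j : Fin n, (j : ℕ) < m → fy.1 (Inv (fy.2 j) fy.1) = fy.2 j} : ℝ)
      / (Nat.card ((𝔽 → 𝔽) × (Fin n → 𝔽))) ≤
    ∏ j ∈ Finset.Icc 1 m,
      (2 * (j : ℝ) / n + max ((1 / (n : ℝ)) ^ ((1 : ℝ) / 4)) (4 * (j : ℝ) / n)) :=
  stmt_8_general n hn Inv haff m hm
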